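/- arXiv:0704.3992 — 3 statements merged into one kernel-verified Lean document; each statement's English description precedes it below -/
import Mathlib

section
/- Let X_1, …, X_k with k ≥ 2 be pairwise disjoint nonempty closed subsets of Euclidean space ℝⁿ (n ≥ 1). Then the conflict set Conf(X) is nonempty. -/
open Metric Set

/-- The territory of the set `X i` within the collection `X`. -/
def Ter {n k : ℕ} (X : Fin k → Set (EuclideanSpace ℝ (Fin n))) (i : Fin k) :
    Set (EuclideanSpace ℝ (Fin n)) :=
  {x | ∀ j, Metric.infDist x (X i) ≤ Metric.infDist x (X j)}

/-- The conflict set of the collection `X`. -/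
def Conf {n k : ℕ} (X : Fin k → Set (EuclideanSpace ℝ (Fin n))) :
    Set (EuclideanSpace ℝ (Fin n)) :=
  {x | ∃ i j, i ≠ j ∧ x ∈ Ter X i ∧ x ∈ Ter X j}

/-!
The territories are closed, cover the space, and each contains its own set. A connected space
is not the disjoint union of finitely many closed sets of which at least two are nonempty, so two
territories meet.
-/

theorem exists_ne_inter_nonempty_of_iUnion_eq_univ {α ι : Type*} [TopologicalSpace α]
    [PreconnectedSpace α] [Finite ι] {F : ι → Set α} (hF : ∀ i, IsClosed (F i))
    (hcover : ⋃ i, F i = univ) {i j : ι} (hij : i ≠ j) (hi : (F i).Nonempty)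
    (hj : (F j).Nonempty) : ∃ i' j', i' ≠ j' ∧ (F i' ∩ F j').Nonempty := by
  set G := ⋃ l : {l // l ≠ i}, F l
  have hsplit : univ ⊆ F i ∪ G := by
    intro x _
    obtain ⟨l, hl⟩ := mem_iUnion.1 (hcover ▸ mem_univ x)
    by_cases h : l = i
    · exact Or.inl (h ▸ hl)
    · exact Or.inr (mem_iUnion.2 ⟨⟨l, h⟩, hl⟩)
  have hGne : (univ ∩ G).Nonempty :=
    hj.mono fun x hx ↦ ⟨mem_univ x, mem_iUnion.2 ⟨⟨j, hij.symm⟩, hx⟩⟩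
  obtain ⟨x, -, hxi, hxG⟩ := isPreconnected_closed_iff.1 isPreconnected_univ _ _ (hF i)
    (isClosed_iUnion_of_finite fun l : {l // l ≠ i} ↦ hF l) hsplit (by simpa using hi) hGne
  obtain ⟨⟨l, hl⟩, hxl⟩ := mem_iUnion.1 hxG
  exact ⟨i, l, Ne.symm hl, x, hxi, hxl⟩

section Territory

variable {n k : ℕ} (X : Fin k → Set (EuclideanSpace ℝ (Fin n)))

theorem isClosed_ter (i : Fin k) : IsClosed (Ter X i) := by
  simp only [Ter, ofPred_forall]
  exact isClosed_iInter fun j ↦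
    isClosed_le (continuous_infDist_pt _) (continuous_infDist_pt _)

theorem subset_ter (i : Fin k) : X i ⊆ Ter X i :=
  fun _ hx _ ↦ (infDist_zero_of_mem hx).trans_le infDist_nonneg

theorem iUnion_ter_eq_univ [NeZero k] : ⋃ i, Ter X i = univ := by
  refine eq_univ_of_forall fun x ↦ mem_iUnion.2 ?_
  exact Finite.exists_min fun i ↦ infDist x (X i)

end Territory

theorem conf_nonempty_general {n k : ℕ} (hk : 2 ≤ k)
    (X : Fin k → Set (EuclideanSpace ℝ (Fin n)))
    (hne : ∀ i, (X i).Nonempty) :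
    (Conf X).Nonempty := by
  have : NeZero k := ⟨by omega⟩
  have h01 : (⟨0, by omega⟩ : Fin k) ≠ ⟨1, by omega⟩ := by simp
  obtain ⟨i, j, hij, x, hxi, hxj⟩ := exists_ne_inter_nonempty_of_iUnion_eq_univ
    (isClosed_ter X) (iUnion_ter_eq_univ X) h01
    ((hne _).mono (subset_ter X _)) ((hne _).mono (subset_ter X _))
  exact ⟨x, i, j, hij, hxi, hxj⟩

theorem conf_nonempty {n k : ℕ} (hn : 1 ≤ n) (hk : 2 ≤ k)
    (X : Fin k → Set (EuclideanSpace ℝ (Fin n)))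
    (hdisj : ∀ i j, i ≠ j → Disjoint (X i) (X j))
    (hne : ∀ i, (X i).Nonempty)
    (hcl : ∀ i, IsClosed (X i)) :
    (Conf X).Nonempty :=
  conf_nonempty_general hk X hne
end

section
/- (Shadow Lemma 2.4.) Let X_1, …, X_k be pairwise disjoint nonempty closed subsets of Euclidean space ℝⁿ, let x₀ ∈ ℝⁿ, and let r₀ > 0. Suppose every set lies in the shadow of its support at x₀, i.e., for each j, every y ∈ X_j satisfies dist(y, x₀) ≥ r₀ and x₀ + (r₀/dist(y, x₀))•(y − x₀) ∈ X_j. Let X̃_j = X_j ∩ sphere(x₀, r₀) and X̃ = (X̃_1, …, X̃_k). Then for each j, Ter(X_j, X) ∩ B(x₀, r₀/3) = Ter(X̃_j, X̃) ∩ B(x₀, r₀/3), where B(x₀, r₀/3) is the open ball of radius r₀/3. -/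
/-!
Radially projecting a point `y` with `‖y - x₀‖ ≥ r₀` onto the sphere `sphere x₀ r₀` brings it
closer to every point of the closed ball `closedBall x₀ r₀`: along the ray from `x₀` through `y`,
the squared distance to `x` is a quadratic in the radius whose vertex lies at radius at most
`‖x - x₀‖ ≤ r₀`. Since each `X j` contains the projections of its points, near `x₀` the
distance to `X j` is the distance to `X j ∩ sphere x₀ r₀`, so the territories agree there.
-/

open Metric Set

section RadialProjection

variable {E : Type*} [NormedAddCommGroup E] [InnerProductSpace ℝ E]

theorem norm_sub_smul_le_norm_sub {a b : E} {t : ℝ} (ht₀ : 0 ≤ t) (ht₁ : t ≤ 1)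
    (ha : ‖a‖ ≤ t * ‖b‖) : ‖a - t • b‖ ≤ ‖a - b‖ := by
  have hinner : inner ℝ a b ≤ t * ‖b‖ ^ 2 :=
    calc inner ℝ a b ≤ ‖a‖ * ‖b‖ := real_inner_le_norm a b
      _ ≤ t * ‖b‖ * ‖b‖ := by gcongr
      _ = t * ‖b‖ ^ 2 := by ring
  have hsq : ‖a - t • b‖ ^ 2 ≤ ‖a - b‖ ^ 2 := by
    rw [norm_sub_sq_real, norm_sub_sq_real, real_inner_smul_right, norm_smul,
      Real.norm_of_nonneg ht₀]
    nlinarith [mul_nonneg (sub_nonneg.2 ht₁) (sub_nonneg.2 ht₁), sq_nonneg ‖b‖]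
  exact pow_le_pow_iff_left₀ (norm_nonneg _) (norm_nonneg _) two_ne_zero |>.1 hsq

theorem dist_add_div_dist_smul_sub {x₀ y : E} {r : ℝ} (hr : 0 ≤ r) (hy : r ≤ dist y x₀) :
    dist (x₀ + (r / dist y x₀) • (y - x₀)) x₀ = r := by
  rcases hr.eq_or_lt with rfl | hr
  · simp
  rw [dist_eq_norm, add_sub_cancel_left, norm_smul, ← dist_eq_norm, Real.norm_of_nonneg
    (by positivity), div_mul_cancel₀ _ (hr.trans_le hy).ne']

theorem dist_add_div_dist_smul_sub_le {x x₀ y : E} {r : ℝ} (hx : dist x x₀ ≤ r)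
    (hy : r ≤ dist y x₀) : dist x (x₀ + (r / dist y x₀) • (y - x₀)) ≤ dist x y := by
  have hr : 0 ≤ r := dist_nonneg.trans hx
  have hdist : r / dist y x₀ * dist y x₀ = r := by
    rcases (hr.trans hy).eq_or_lt with h | h
    · rw [← h, mul_zero]; linarith
    · exact div_mul_cancel₀ _ h.ne'
  simp only [dist_eq_norm] at hx hy hdist ⊢
  rw [sub_add_eq_sub_sub, ← sub_sub_sub_cancel_right x y x₀]
  refine norm_sub_smul_le_norm_sub (by positivity) (div_le_one_of_le₀ hy (norm_nonneg _)) ?_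
  rwa [hdist]

end RadialProjection

theorem Metric.infDist_eq_of_subset_of_forall_exists_dist_le {α : Type*} [PseudoMetricSpace α]
    {x : α} {s t : Set α} (hst : s ⊆ t) (h : ∀ b ∈ t, ∃ a ∈ s, dist x a ≤ dist x b) :
    infDist x s = infDist x t := by
  refine congrArg ENNReal.toReal (le_antisymm ?_ (infEDist_anti hst))
  refine le_infEDist.2 fun b hb => ?_
  obtain ⟨a, ha, hab⟩ := h b hb
  calc infEDist x s ≤ edist x a := infEDist_le_edist_of_mem ha
    _ ≤ edist x b := by rw [edist_dist, edist_dist]; exact ENNReal.ofReal_le_ofReal hab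

theorem Ter_inter_eq_of_infDist_eq {n k : ℕ} {X Y : Fin k → Set (EuclideanSpace ℝ (Fin n))}
    {S : Set (EuclideanSpace ℝ (Fin n))} (h : ∀ x ∈ S, ∀ j, infDist x (X j) = infDist x (Y j))
    (i : Fin k) : Ter X i ∩ S = Ter Y i ∩ S := by
  ext x
  refine and_congr_left fun hx => forall_congr' fun j => ?_
  rw [h x hx, h x hx]

theorem shadow_lemma_general {n k : ℕ}
    (X : Fin k → Set (EuclideanSpace ℝ (Fin n)))
    (x₀ : EuclideanSpace ℝ (Fin n)) (r₀ : ℝ)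
    (hshadow : ∀ j, ∀ y ∈ X j, r₀ ≤ dist y x₀ ∧
      x₀ + (r₀ / dist y x₀) • (y - x₀) ∈ X j)
    (Xt : Fin k → Set (EuclideanSpace ℝ (Fin n)))
    (hXt : ∀ j, Xt j = X j ∩ Metric.sphere x₀ r₀) :
    ∀ j, Ter X j ∩ Metric.ball x₀ (r₀ / 3) = Ter Xt j ∩ Metric.ball x₀ (r₀ / 3) := by
  refine Ter_inter_eq_of_infDist_eq fun x hx j => ?_
  have hxr : dist x x₀ ≤ r₀ := by
    linarith [mem_ball.1 hx, dist_nonneg (x := x) (y := x₀)]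
  rw [hXt j]
  refine (infDist_eq_of_subset_of_forall_exists_dist_le inter_subset_left fun y hy => ?_).symm
  obtain ⟨hyr, hyX⟩ := hshadow j y hy
  exact ⟨_, ⟨hyX, dist_add_div_dist_smul_sub (dist_nonneg.trans hxr) hyr⟩,
    dist_add_div_dist_smul_sub_le hxr hyr⟩

/-- Shadow Lemma 2.4: if all the sets of the collection lie in the shadow of their
supports on the sphere of radius `r₀` around `x₀`, then near `x₀` the territories
of the collection coincide with the territories of the supports. -/
theorem shadow_lemma {n k : ℕ}
    (X : Fin k → Set (EuclideanSpace ℝ (Fin n)))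
    (hdisj : ∀ i j, i ≠ j → Disjoint (X i) (X j))
    (hne : ∀ i, (X i).Nonempty)
    (hcl : ∀ i, IsClosed (X i))
    (x₀ : EuclideanSpace ℝ (Fin n)) (r₀ : ℝ) (hr₀ : 0 < r₀)
    (hshadow : ∀ j, ∀ y ∈ X j, r₀ ≤ dist y x₀ ∧
      x₀ + (r₀ / dist y x₀) • (y - x₀) ∈ X j)
    (Xt : Fin k → Set (EuclideanSpace ℝ (Fin n)))
    (hXt : ∀ j, Xt j = X j ∩ Metric.sphere x₀ r₀) :
    ∀ j, Ter X j ∩ Metric.ball x₀ (r₀ / 3) = Ter Xt j ∩ Metric.ball x₀ (r₀ / 3) :=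
  shadow_lemma_general X x₀ r₀ hshadow Xt hXt
end

section
/- (Tangent cone of the example at the origin.) In ℝ³ with coordinates (x₁, x₂, x₃), let X₁ = {x : x₃ = 1 or x₃ = −1}, X₂ = {(1,0,0), (−1,0,0)}, and C = Conf({X₁, X₂}) = {x : infDist(x, X₁) = infDist(x, X₂)}. Then the Bouligand tangent cone of C at the origin equals the union of two transversally intersecting planes: tangentCone(C, 0) = { v ∈ ℝ³ : v₃² = v₁² } = {v : v₃ = v₁} ∪ {v : v₃ = −v₁}. -/
open Metric Set

/-- The union of the two horizontal planes `x₃ = 1` and `x₃ = -1` in `ℝ³`. -/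
def Xone : Set (EuclideanSpace ℝ (Fin 3)) := {x | x 2 = 1 ∨ x 2 = -1}

/-- The two points `(1,0,0)` and `(-1,0,0)` in `ℝ³`. -/
noncomputable def Xtwo : Set (EuclideanSpace ℝ (Fin 3)) :=
  {EuclideanSpace.single (0 : Fin 3) (1 : ℝ), EuclideanSpace.single (0 : Fin 3) (-1 : ℝ)}

/-- The conflict set of `Xone` and `Xtwo`: points equidistant from them. -/
noncomputable def C : Set (EuclideanSpace ℝ (Fin 3)) :=
  {x | Metric.infDist x Xone = Metric.infDist x Xtwo}

/-!
Near the origin `infDist x Xone = 1 - |x 2|` and `infDist x Xtwo = √((1 - |x 0|)² + x 1² + x 2²)`,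
so there `C` is the set `2 |x 0| - 2 |x 2| = x 0² + x 1²`. The right-hand side is quadratic, so
every tangent vector satisfies `|v 0| = |v 2|`. Conversely, solving the equation for `|x 0|` gives,
for each such `v`, a curve in `C` leaving the origin with velocity `v`.
-/

open Filter Topology Asymptotics

section TangentCone

variable {E : Type*} [NormedAddCommGroup E] [NormedSpace ℝ E]

theorem tangentConeAt_zero_subset_of_isLittleO {s : Set E} {f : E → ℝ} (hf : Continuous f)
    (hf_smul : ∀ (c : ℝ) (x : E), f (c • x) = |c| * f x) (hs : f =o[𝓝[s] 0] (‖·‖)) :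
    tangentConeAt ℝ s 0 ⊆ {v | f v = 0} := by
  intro v hv
  obtain ⟨c, d, hc, hds, hcd⟩ := mem_tangentConeAt_iff_exists_seq_norm_tendsto_atTop.1 hv
  have hd : Tendsto d atTop (𝓝[s] 0) :=
    tendsto_nhdsWithin_iff.2 ⟨tangentConeAt.lim_zero _ hc hcd, by simpa using hds⟩
  have hsmall : (fun n ↦ f (c n • d n)) =o[atTop] fun n ↦ ‖c n • d n‖ := by
    simp only [hf_smul, norm_smul, Real.norm_eq_abs]
    exact (isBigO_refl (fun n ↦ |c n|) atTop).mul_isLittleO (hs.comp_tendsto hd)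
  exact tendsto_nhds_unique ((hf.tendsto v).comp hcd)
    ((isLittleO_one_iff ℝ).1 (hsmall.trans_isBigO (hcd.norm.isBigO_one ℝ)))

theorem mem_tangentConeAt_of_hasDerivWithinAt_Ici {s : Set E} {γ : ℝ → E} {v : E}
    (hγ : HasDerivWithinAt γ v (Ici 0) 0) (hs : ∀ᶠ t in 𝓝[≥] 0, γ t ∈ s) :
    v ∈ tangentConeAt ℝ s (γ 0) := by
  have hone : (1 : ℝ) ∈ tangentConeAt ℝ (Ici 0 ∩ γ ⁻¹' s) 0 := by
    rw [tangentConeAt_congr (nhdsWithin_inter_of_mem' (t := γ ⁻¹' s) hs)]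
    simpa using mem_tangentConeAt_of_segment_subset ((convex_Ici (0 : ℝ)).segment_subset
      self_mem_Ici (mem_Ici.2 zero_le_one))
  have himage : γ '' (Ici 0 ∩ γ ⁻¹' s) ⊆ s :=
    (image_mono inter_subset_right).trans (image_preimage_subset γ s)
  simpa using tangentConeAt_mono himage
    ((hγ.mono inter_subset_left).hasFDerivWithinAt.mapsTo_tangent_cone hone)

end TangentCone

theorem EuclideanSpace.abs_apply_le_norm {ι : Type*} [Fintype ι] (x : EuclideanSpace ℝ ι)
    (i : ι) : |x i| ≤ ‖x‖ := by
  simpa using PiLp.norm_apply_le x i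

local notation "ℝ³" => EuclideanSpace ℝ (Fin 3)

theorem infDist_Xone {x : ℝ³} (hx : |x 2| ≤ 1) : infDist x Xone = 1 - |x 2| := by
  have hXone : ∀ c : ℝ, |c| = 1 → x + (c - x 2) • EuclideanSpace.single 2 1 ∈ Xone := by
    intro c hc
    simpa [Xone, abs_eq zero_le_one] using hc
  refine le_antisymm ?_ ((le_infDist ⟨_, hXone 1 abs_one⟩).2 fun y hy ↦ ?_)
  · obtain ⟨c, hc, hcx⟩ : ∃ c : ℝ, |c| = 1 ∧ |c - x 2| = 1 - |x 2| := by
      rcases le_total 0 (x 2) with h | h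
      · exact ⟨1, abs_one, by rw [abs_of_nonneg h, abs_of_nonneg (by linarith [le_abs_self (x 2)])]⟩
      · refine ⟨-1, by simp, ?_⟩
        rw [abs_of_nonpos h, abs_of_nonpos (by linarith [neg_abs_le (x 2)])]
        ring
    calc infDist x Xone ≤ dist x (x + (c - x 2) • EuclideanSpace.single 2 1) :=
          infDist_le_dist_of_mem (hXone c hc)
      _ = 1 - |x 2| := by simp [norm_smul, hcx]
  · have hy2 : |y 2| = 1 := by rcases hy with h | h <;> simp [h]
    calc 1 - |x 2| ≤ |x 2 - y 2| := by
          linarith [abs_sub_abs_le_abs_sub (y 2) (x 2), abs_sub_comm (x 2) (y 2)]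
      _ ≤ dist x y := by simpa [Real.dist_eq] using PiLp.dist_apply_le x y 2

theorem dist_single_zero (x : ℝ³) (c : ℝ) :
    dist x (EuclideanSpace.single 0 c) = √((x 0 - c) ^ 2 + x 1 ^ 2 + x 2 ^ 2) := by
  simp [EuclideanSpace.dist_eq, Fin.sum_univ_three, Real.dist_eq, sq_abs]

theorem infDist_Xtwo (x : ℝ³) : infDist x Xtwo = √((1 - |x 0|) ^ 2 + x 1 ^ 2 + x 2 ^ 2) := by
  have hXtwo : ∀ y ∈ Xtwo, ∃ c : ℝ, |c| = 1 ∧ y = EuclideanSpace.single 0 c := by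
    rintro y (rfl | rfl)
    exacts [⟨1, by simp, rfl⟩, ⟨-1, by simp, rfl⟩]
  refine le_antisymm ?_ ((le_infDist ⟨_, .inl rfl⟩).2 fun y hy ↦ ?_)
  · rcases le_total 0 (x 0) with h | h
    · calc infDist x Xtwo ≤ dist x (EuclideanSpace.single 0 1) :=
            infDist_le_dist_of_mem (.inl rfl)
        _ = _ := by rw [dist_single_zero, abs_of_nonneg h, ← neg_sub, neg_sq]
    · calc infDist x Xtwo ≤ dist x (EuclideanSpace.single 0 (-1)) :=
            infDist_le_dist_of_mem (.inr rfl)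
        _ = _ := by rw [dist_single_zero, abs_of_nonpos h]; ring_nf
  · obtain ⟨c, hc, rfl⟩ := hXtwo y hy
    rw [dist_single_zero]
    gcongr √(?_ + _ + _)
    rw [← hc]
    exact sq_le_sq.2 ((abs_abs_sub_abs_le_abs_sub c (x 0)).trans_eq (abs_sub_comm _ _))

theorem mem_C_iff {x : ℝ³} (hx : |x 2| ≤ 1) :
    x ∈ C ↔ 2 * |x 0| - 2 * |x 2| = x 0 ^ 2 + x 1 ^ 2 := by
  rw [C, mem_ofPred_eq, infDist_Xone hx, infDist_Xtwo, eq_comm,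
    Real.sqrt_eq_iff_eq_sq (by positivity) (by linarith)]
  constructor <;> intro h <;> nlinarith [sq_abs (x 0), sq_abs (x 2)]

theorem mem_C_of_abs_eq {x : ℝ³} (hx : |x 2| ≤ 1) (hq : 0 ≤ 1 - 2 * |x 2| - x 1 ^ 2)
    (hx0 : |x 0| = 1 - √(1 - 2 * |x 2| - x 1 ^ 2)) : x ∈ C := by
  have hsq := Real.sq_sqrt hq
  rw [mem_C_iff hx, ← sq_abs (x 0), hx0]
  linear_combination -hsq

theorem tangentConeAt_C_subset : tangentConeAt ℝ C 0 ⊆ {v : ℝ³ | |v 2| = |v 0|} := by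
  have hC : ∀ᶠ x in 𝓝[C] (0 : ℝ³), |x 0| - |x 2| = (x 0 ^ 2 + x 1 ^ 2) / 2 := by
    filter_upwards [self_mem_nhdsWithin, nhdsWithin_le_nhds (ball_mem_nhds (0 : ℝ³) one_pos)]
      with x hxC hx
    have hx2 : |x 2| ≤ 1 := (EuclideanSpace.abs_apply_le_norm x 2).trans (mem_ball_zero_iff.1 hx).le
    linarith [(mem_C_iff hx2).1 hxC]
  have hquad : (fun x : ℝ³ ↦ |x 0| - |x 2|) =O[𝓝[C] 0] fun x ↦ ‖x‖ ^ 2 := by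
    refine IsBigO.of_bound 1 (hC.mono fun x hx ↦ ?_)
    have hsq (i : Fin 3) : x i ^ 2 ≤ ‖x‖ ^ 2 := by
      simpa only [sq_abs] using
        pow_le_pow_left₀ (abs_nonneg _) (EuclideanSpace.abs_apply_le_norm x i) 2
    rw [hx, Real.norm_of_nonneg (by positivity), norm_pow, norm_norm, one_mul]
    linarith [hsq 0, hsq 1]
  intro v hv
  have := tangentConeAt_zero_subset_of_isLittleO (by fun_prop)
    (fun c x ↦ by simp only [PiLp.smul_apply, smul_eq_mul, abs_mul]; ring)
    (hquad.trans_isLittleO (by simpa using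
      (isLittleO_norm_pow_norm_pow (E' := ℝ³) one_lt_two).mono nhdsWithin_le_nhds)) hv
  exact (sub_eq_zero.1 this).symm

theorem subset_tangentConeAt_C : {v : ℝ³ | |v 2| = |v 0|} ⊆ tangentConeAt ℝ C 0 := by
  intro v hv
  obtain ⟨σ, hσ, hσv⟩ : ∃ σ : ℝ, |σ| = 1 ∧ σ * |v 0| = v 0 := by
    rcases le_total 0 (v 0) with h | h
    · exact ⟨1, abs_one, by rw [one_mul, abs_of_nonneg h]⟩
    · exact ⟨-1, by simp, by rw [abs_of_nonpos h]; ring⟩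
  set e : ℝ³ := EuclideanSpace.single 0 1
  set q : ℝ → ℝ := fun t ↦ 1 - 2 * t * |v 0| - t ^ 2 * v 1 ^ 2
  -- `γ t = (σ * (1 - √(q t)), t * v 1, t * v 2)`, which lies in `C` for small `t ≥ 0`
  -- by `mem_C_of_abs_eq`
  set γ : ℝ → ℝ³ := fun t ↦ (σ * (1 - √(q t))) • e + t • (v - v 0 • e)
  have hq : HasDerivAt q (-2 * |v 0|) 0 := by
    refine (((hasDerivAt_id' (0 : ℝ)).const_mul 2).mul_const |v 0|).const_sub 1 |>.sub
      ((hasDerivAt_pow 2 (0 : ℝ)).mul_const (v 1 ^ 2)) |>.congr_deriv ?_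
    ring
  have hγ : HasDerivAt γ v 0 := by
    have hq0 : √(q 0) = 1 := by simp [q]
    refine (((hq.sqrt (by simp [q])).const_sub 1).const_mul σ).smul_const e |>.add
      ((hasDerivAt_id' (0 : ℝ)).smul_const (v - v 0 • e)) |>.congr_deriv ?_
    rw [hq0, show σ * -(-2 * |v 0| / (2 * 1)) = v 0 by linear_combination hσv]
    module
  have hmem : ∀ᶠ t in 𝓝[≥] 0, γ t ∈ C := by
    have hq_pos : ∀ᶠ t in 𝓝 (0 : ℝ), 0 < q t :=
      continuousAt_const.eventually_lt (by fun_prop : Continuous q).continuousAt (by simp [q])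
    have hv2 : ∀ᶠ t in 𝓝 (0 : ℝ), |t * v 2| < 1 :=
      (by fun_prop : Continuous fun t : ℝ ↦ |t * v 2|).continuousAt.eventually_lt
        continuousAt_const (by simp)
    filter_upwards [self_mem_nhdsWithin, nhdsWithin_le_nhds hq_pos, nhdsWithin_le_nhds hv2]
      with t (ht : 0 ≤ t) hqt hvt
    have h0 : γ t 0 = σ * (1 - √(q t)) := by simp [γ, e]
    have h1 : γ t 1 = t * v 1 := by simp [γ, e]
    have h2 : γ t 2 = t * v 2 := by simp [γ, e]
    have hq_eq : 1 - 2 * |γ t 2| - γ t 1 ^ 2 = q t := by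
      rw [h1, h2, abs_mul, abs_of_nonneg ht, hv]; ring
    have hsqrt : √(q t) ≤ 1 := Real.sqrt_le_one.2 (by
      simp only [q]; nlinarith [mul_nonneg ht (abs_nonneg (v 0)), sq_nonneg (t * v 1)])
    refine mem_C_of_abs_eq (h2 ▸ hvt.le) (hq_eq ▸ hqt.le) ?_
    rw [hq_eq, h0, abs_mul, hσ, one_mul, abs_of_nonneg (by linarith)]
  simpa [γ, q] using mem_tangentConeAt_of_hasDerivWithinAt_Ici hγ.hasDerivWithinAt hmem

/-- The tangent cone of the conflict set of the example at the origin is the union of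
two transversally intersecting planes. -/
theorem tangentCone_conf_example :
    tangentConeAt ℝ C 0 = {v : EuclideanSpace ℝ (Fin 3) | (v 2) ^ 2 = (v 0) ^ 2} ∧
      {v : EuclideanSpace ℝ (Fin 3) | (v 2) ^ 2 = (v 0) ^ 2} =
        {v : EuclideanSpace ℝ (Fin 3) | v 2 = v 0} ∪
          {v : EuclideanSpace ℝ (Fin 3) | v 2 = -(v 0)} := by
  have hsq : {v : EuclideanSpace ℝ (Fin 3) | (v 2) ^ 2 = (v 0) ^ 2} = {v | |v 2| = |v 0|} := by
    ext v
    exact sq_eq_sq_iff_abs_eq_abs _ _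
  refine ⟨hsq ▸ tangentConeAt_C_subset.antisymm subset_tangentConeAt_C, ?_⟩
  ext v
  simp only [mem_ofPred_eq, mem_union, sq_eq_sq_iff_abs_eq_abs, abs_eq_abs]
end
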